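/- Let B be the closed unit ball of a real Hilbert space H and x ∈ H with ‖x‖ = 1. Suppose v ≠ 0 is such that there exists δ > 0 with ‖x + tv‖ ≥ 1 for all t ∈ (0, δ). Then the directional derivative of P_B at x along v exists and equals v − ⟨x, v⟩ x. -/

import Mathlib

open scoped RealInnerProductSpace Topology
open Filter

/-! A nearest point `w` of the ball of radius `r` to a point `z` with `r ≤ ‖z‖` satisfies
`‖z‖ ≤ ‖z - w‖ + ‖w‖ ≤ (‖z‖ - r) + r`, so the triangle inequality is an equality and, the space
being an inner product space, `w = (r / ‖z‖) • z`. Hence along the directions `v` in which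
`x + t • v` stays outside the open ball, `P` agrees with the smooth radial retraction
`u ↦ ‖u‖⁻¹ • u`, whose derivative at a unit vector `x` in direction `v` is `v - ⟪x, v⟫ • x`. -/

section

variable {H : Type*} [NormedAddCommGroup H] [InnerProductSpace ℝ H]

theorem HasDerivAt.norm {f : ℝ → H} {f' : H} {t : ℝ} (hf : HasDerivAt f f' t) (h0 : f t ≠ 0) :
    HasDerivAt (fun s => ‖f s‖) (⟪f t, f'⟫ / ‖f t‖) t := by
  have h := hf.norm_sq.sqrt (by positivity)
  simp only [Real.sqrt_sq (norm_nonneg _)] at h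
  convert h using 1
  field_simp

theorem HasDerivAt.inv_norm_smul {f : ℝ → H} {f' : H} {t : ℝ} (hf : HasDerivAt f f' t)
    (h0 : f t ≠ 0) :
    HasDerivAt (fun s => ‖f s‖⁻¹ • f s) (‖f t‖⁻¹ • f' - (⟪f t, f'⟫ / ‖f t‖ ^ 3) • f t) t := by
  have h := ((hf.norm h0).inv (norm_ne_zero_iff.mpr h0)).smul hf
  refine h.congr_deriv ?_
  rw [Pi.inv_apply, sub_eq_add_neg, ← neg_smul]
  congr 2
  field_simp

theorem hasLineDerivAt_inv_norm_smul {x : H} (hx : ‖x‖ = 1) (v : H) :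
    HasLineDerivAt ℝ (fun u : H => ‖u‖⁻¹ • u) (v - ⟪x, v⟫ • x) x v := by
  have hline : HasDerivAt (fun t : ℝ => x + t • v) v 0 := by
    simpa using ((hasDerivAt_id (0 : ℝ)).smul_const v).const_add x
  have h := hline.inv_norm_smul (by simp [← norm_ne_zero_iff, hx])
  rw [HasLineDerivAt]
  convert h using 1
  simp [hx]

theorem eq_div_norm_smul_of_norm_le_of_norm_sub_le {r : ℝ} {z w : H} (hz : z ≠ 0)
    (hw : ‖w‖ ≤ r) (hzw : ‖z - w‖ ≤ ‖z‖ - r) : w = (r / ‖z‖) • z := by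
  have htri : ‖z‖ ≤ ‖z - w‖ + ‖w‖ := norm_le_norm_sub_add z w
  have hwr : ‖w‖ = r := by linarith
  have hzwr : ‖z - w‖ = ‖z‖ - r := by linarith
  have hinner : ⟪z, w⟫ = ‖z‖ * ‖w‖ := by
    have := norm_sub_sq_real z w
    rw [hzwr, hwr] at this
    rw [hwr]
    linarith
  have hz' : ‖z‖ ≠ 0 := norm_ne_zero_iff.mpr hz
  rw [inner_eq_norm_mul_iff_real, hwr] at hinner
  rw [div_eq_inv_mul, mul_smul, hinner, inv_smul_smul₀ hz']

theorem eq_div_norm_smul_of_isMinOn_closedBall {r : ℝ} (hr : 0 < r) {z w : H} (hz : r ≤ ‖z‖)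
    (hw : w ∈ Metric.closedBall (0 : H) r)
    (hmin : IsMinOn (fun y => ‖z - y‖) (Metric.closedBall (0 : H) r) w) :
    w = (r / ‖z‖) • z := by
  have hz0 : 0 < ‖z‖ := hr.trans_le hz
  refine eq_div_norm_smul_of_norm_le_of_norm_sub_le (norm_pos_iff.mp hz0)
    (mem_closedBall_zero_iff.mp hw) ?_
  have hcand : (r / ‖z‖) • z ∈ Metric.closedBall (0 : H) r := by
    rw [mem_closedBall_zero_iff, norm_smul, Real.norm_of_nonneg (by positivity),
      div_mul_cancel₀ _ hz0.ne']
  calc ‖z - w‖ ≤ ‖z - (r / ‖z‖) • z‖ := isMinOn_iff.mp hmin _ hcand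
    _ = ‖z‖ - r := by
      have hsub : z - (r / ‖z‖) • z = (1 - r / ‖z‖) • z := by module
      rw [hsub, norm_smul, Real.norm_of_nonneg (sub_nonneg.mpr ((div_le_one hz0).mpr hz))]
      field_simp

end

theorem stmt15_general {H : Type*} [NormedAddCommGroup H] [InnerProductSpace ℝ H]
    (P : H → H)
    (hP : ∀ x, P x ∈ Metric.closedBall (0 : H) 1 ∧
      ∀ z ∈ Metric.closedBall (0 : H) 1, ‖x - P x‖ ≤ ‖x - z‖)
    (x : H) (hx : ‖x‖ = 1) (v : H)
    (hup : ∃ δ : ℝ, 0 < δ ∧ ∀ t : ℝ, t ∈ Set.Ioo (0 : ℝ) δ → 1 ≤ ‖x + t • v‖) :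
    Tendsto (fun t : ℝ => t⁻¹ • (P (x + t • v) - P x)) (𝓝[>] (0 : ℝ))
      (𝓝 (v - ⟪x, v⟫ • x)) := by
  have hradial : ∀ z : H, 1 ≤ ‖z‖ → P z = ‖z‖⁻¹ • z := fun z hz => by
    simpa using eq_div_norm_smul_of_isMinOn_closedBall one_pos hz (hP z).1
      (isMinOn_iff.mpr (hP z).2)
  obtain ⟨δ, hδ, hδv⟩ := hup
  refine (hasLineDerivAt_inv_norm_smul hx v).tendsto_slope_zero_right.congr' ?_
  filter_upwards [Ioo_mem_nhdsGT hδ] with t ht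
  rw [hradial x hx.ge, hradial _ (hδv t ht)]

theorem stmt15 {H : Type*} [NormedAddCommGroup H] [InnerProductSpace ℝ H] [CompleteSpace H]
    (P : H → H)
    (hP : ∀ x, P x ∈ Metric.closedBall (0 : H) 1 ∧
      ∀ z ∈ Metric.closedBall (0 : H) 1, ‖x - P x‖ ≤ ‖x - z‖)
    (x : H) (hx : ‖x‖ = 1) (v : H) (hv : v ≠ 0)
    (hup : ∃ δ : ℝ, 0 < δ ∧ ∀ t : ℝ, t ∈ Set.Ioo (0 : ℝ) δ → 1 ≤ ‖x + t • v‖) :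
    Tendsto (fun t : ℝ => t⁻¹ • (P (x + t • v) - P x)) (𝓝[>] (0 : ℝ))
      (𝓝 (v - ⟪x, v⟫ • x)) :=
  stmt15_general P hP x hx v hup
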